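/- Let n be odd, let k be a positive integer with gcd(k, n) = 1, and let b, c be elements of L = GF(2^n), not both zero. Then the equation b u^{2^k} + b^{2^{-k}} u^{2^{-k}} + c u^{2^{2k}} + c^{2^{-2k}} u^{2^{-2k}} = 0 has at most 16 solutions u in L. -/

import Mathlib

/-- `ipow j x` is `x^{2^{-j}}`, the unique element of `GF(2^n)` whose `2^j`-th power is `x`
(the inverse of the `j`-th iterate of the Frobenius automorphism). -/
noncomputable def ipow {n : ℕ} (j : ℕ) (x : GaloisField 2 n) : GaloisField 2 n :=
  Function.invFun (fun y : GaloisField 2 n => y ^ 2 ^ j) x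

/-!
Raising the equation to the power `2^{2k}` turns it into `P(u) = 0` for the `σ`-linearized
polynomial `P(u) = c u + b^{2^k} σ(u) + b^{2^{2k}} σ³(u) + c^{2^{2k}} σ⁴(u)` with `σ = Frob^k`,
which is nonzero as `b, c` are not both zero; since `gcd(k, n) = 1`, `σ` fixes only `0` and `1`.
A nonzero linearized polynomial of `σ`-degree `d` has at most `|Fix σ|^d` roots: a root `v ≠ 0`
lets us write it as `Q(σ x - (σ v / v) x)` with `Q` of degree `d - 1`, and every fibre of
`x ↦ σ x - (σ v / v) x` is a translate of `v · Fix σ`. Hence there are at most `2^4 = 16` solutions.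
-/

open Finset Function

theorem Set.ncard_preimage_le_mul {α β : Type*} [Finite α] [Finite β] (f : α → β) (t : Set β)
    {m : ℕ} (hm : ∀ b ∈ t, (f ⁻¹' {b}).ncard ≤ m) : (f ⁻¹' t).ncard ≤ m * t.ncard := by
  classical
  have := Fintype.ofFinite α
  have := Fintype.ofFinite β
  rw [Set.ncard_eq_toFinset_card', Set.ncard_eq_toFinset_card']
  refine card_le_mul_card_image_of_maps_to (f := f) (fun a ha => by simpa using ha) m
    fun b hb => ?_
  calc #{a ∈ (f ⁻¹' t).toFinset | f a = b} ≤ #(f ⁻¹' {b}).toFinset :=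
        Finset.card_le_card fun a => by simp
    _ = (f ⁻¹' {b}).ncard := (Set.ncard_eq_toFinset_card' _).symm
    _ ≤ m := hm b (by simpa using hb)

section
variable {R : Type*} [CommRing R] (σ : R →+* R)

def linearizedEval (a : ℕ → R) (d : ℕ) (x : R) : R :=
  ∑ i ∈ range (d + 1), a i * σ^[i] x

@[simp]
lemma linearizedEval_zero (a : ℕ → R) (d : ℕ) : linearizedEval σ a d 0 = 0 := by
  simp [linearizedEval, iterate_map_zero]

/-- Coefficients of the quotient of `∑_{i ≤ d + 1} a i σ^i` by `σ - c` under division on the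
right, computed from the top coefficient down (see `linearizedEval_eq_comp_add`). -/
def quotCoeff (a : ℕ → R) (c : R) (d j : ℕ) : R :=
  if j ≤ d then a (j + 1) + quotCoeff a c d (j + 1) * σ^[j + 1] c else 0
termination_by d + 1 - j

lemma quotCoeff_of_le {a : ℕ → R} {c : R} {d j : ℕ} (hj : j ≤ d) :
    quotCoeff σ a c d j = a (j + 1) + quotCoeff σ a c d (j + 1) * σ^[j + 1] c := by
  rw [quotCoeff, if_pos hj]

lemma quotCoeff_of_lt {a : ℕ → R} {c : R} {d j : ℕ} (hj : d < j) :
    quotCoeff σ a c d j = 0 := by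
  rw [quotCoeff, if_neg (not_le.mpr hj)]

theorem linearizedEval_eq_comp_add (a : ℕ → R) (c : R) (d : ℕ) (x : R) :
    linearizedEval σ a (d + 1) x =
      linearizedEval σ (quotCoeff σ a c d) d (σ x - c * x) +
        (a 0 + quotCoeff σ a c d 0 * c) * x := by
  let T : ℕ → R := fun j => quotCoeff σ a c d j * σ^[j] c * σ^[j] x
  have hT : T (d + 1) = 0 := by simp [T, quotCoeff_of_lt σ (Nat.lt_succ_self d)]
  have hstep : ∀ j ∈ range (d + 1), quotCoeff σ a c d j * σ^[j] (σ x - c * x) =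
      a (j + 1) * σ^[j + 1] x + (T (j + 1) - T j) := by
    intro j hj
    simp only [T, iterate_map_sub, iterate_map_mul, ← iterate_succ_apply]
    linear_combination σ^[j + 1] x *
      quotCoeff_of_le σ (a := a) (c := c) (Nat.lt_succ_iff.mp (mem_range.mp hj))
  rw [linearizedEval, linearizedEval, sum_congr rfl hstep, sum_add_distrib, sum_range_sub,
    hT, sum_range_succ' _ (d + 1)]
  simp only [T, iterate_zero_apply]
  ring

lemma exists_quotCoeff_ne_zero {a : ℕ → R} {c : R} {d : ℕ} (ha : ∃ i ≤ d + 1, a i ≠ 0)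
    (hr : a 0 + quotCoeff σ a c d 0 * c = 0) : ∃ j ≤ d, quotCoeff σ a c d j ≠ 0 := by
  by_contra! hB
  have hB' : ∀ j, quotCoeff σ a c d j = 0 := fun j =>
    (le_or_gt j d).elim (hB j) (quotCoeff_of_lt σ)
  obtain ⟨i, hi, hai⟩ := ha
  apply hai
  cases i with
  | zero => simpa [hB'] using hr
  | succ i =>
    simpa [hB', eq_comm] using quotCoeff_of_le σ (a := a) (c := c) (Nat.succ_le_succ_iff.mp hi)

end

section
variable {L : Type*} [Field L] [Finite L] (σ : L →+* L)

lemma ncard_preimage_singleton_le_ncard_fixedPoints {v : L} (hv : v ≠ 0) (t : L) :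
    ((fun x => σ x - σ v / v * x) ⁻¹' {t}).ncard ≤ (fixedPoints σ).ncard := by
  rcases ((fun x => σ x - σ v / v * x) ⁻¹' {t}).eq_empty_or_nonempty with h | ⟨w, hw⟩
  · simp [h]
  refine (Set.ncard_le_ncard (t := (fun f => w + f * v) '' fixedPoints σ) ?_).trans
    (Set.ncard_image_le (Set.toFinite _))
  intro y hy
  have hσv : σ v ≠ 0 := (map_ne_zero σ).mpr hv
  have hyw : σ y - σ w = σ v / v * (y - w) := by
    simp only [Set.mem_preimage, Set.mem_singleton_iff] at hy hw
    linear_combination hy - hw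
  refine ⟨(y - w) / v, ?_, by field_simp; ring⟩
  rw [mem_fixedPoints, IsFixedPt, map_div₀, map_sub, hyw]
  field_simp

theorem ncard_setOf_linearizedEval_eq_zero_le {q : ℕ} (hq : (fixedPoints σ).ncard ≤ q) :
    ∀ (d : ℕ) (a : ℕ → L), (∃ i ≤ d, a i ≠ 0) →
      {x | linearizedEval σ a d x = 0}.ncard ≤ q ^ d := by
  intro d
  induction d with
  | zero =>
    rintro a ⟨i, hi, hai⟩
    obtain rfl : i = 0 := Nat.le_zero.mp hi
    have hroots : {x | linearizedEval σ a 0 x = 0} ⊆ {0} := fun x hx => by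
      simpa [linearizedEval, hai] using hx
    simpa using Set.ncard_le_ncard hroots
  | succ d ih =>
    intro a ha
    by_cases hv : ∃ v ≠ 0, linearizedEval σ a (d + 1) v = 0
    · obtain ⟨v, hv0, hv⟩ := hv
      have hdiv := linearizedEval_eq_comp_add σ a (σ v / v) d
      have hr : a 0 + quotCoeff σ a (σ v / v) d 0 * (σ v / v) = 0 := by
        have hLv : σ v - σ v / v * v = 0 := by rw [div_mul_cancel₀ _ hv0, sub_self]
        simpa [hv, hLv, hv0] using (hdiv v).symm
      have hroots : {x | linearizedEval σ a (d + 1) x = 0} =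
          (fun x => σ x - σ v / v * x) ⁻¹'
            {y | linearizedEval σ (quotCoeff σ a (σ v / v) d) d y = 0} := by
        ext x
        simp [hdiv, hr]
      calc _ ≤ (fixedPoints σ).ncard *
              {y | linearizedEval σ (quotCoeff σ a (σ v / v) d) d y = 0}.ncard :=
            hroots ▸ Set.ncard_preimage_le_mul _ _ fun t _ =>
              ncard_preimage_singleton_le_ncard_fixedPoints σ hv0 t
        _ ≤ q * q ^ d := Nat.mul_le_mul hq (ih _ (exists_quotCoeff_ne_zero σ ha hr))
        _ = q ^ (d + 1) := by ring
    · push Not at hv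
      have hq1 : 1 ≤ q :=
        ((Set.ncard_pos (s := fixedPoints σ) (Set.toFinite _)).mpr ⟨0, map_zero σ⟩).trans_le hq
      calc _ ≤ ({0} : Set L).ncard := Set.ncard_le_ncard fun x hx => by_contra fun h => hv x h hx
        _ ≤ q ^ (d + 1) := by simpa using Nat.one_le_pow _ _ hq1
end

namespace GaloisField
variable {p : ℕ} [Fact p.Prime] {n : ℕ}

lemma pow_pow_eq_self (x : GaloisField p n) : x ^ p ^ n = x := by
  rcases eq_or_ne n 0 with rfl | hn
  · rw [pow_zero, pow_one]
  · have := Fintype.ofFinite (GaloisField p n)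
    rw [← GaloisField.card p n hn, Nat.card_eq_fintype_card]
    exact FiniteField.pow_card x

lemma pow_eq_self_of_pow_pow_eq_self {k : ℕ} (hkn : k.gcd n = 1) {x : GaloisField p n}
    (hx : x ^ p ^ k = x) : x ^ p = x := by
  have hk : IsPeriodicPt (frobenius _ p) k x := by
    rwa [IsPeriodicPt, IsFixedPt, iterate_frobenius]
  have hn : IsPeriodicPt (frobenius _ p) n x := by
    rw [IsPeriodicPt, IsFixedPt, iterate_frobenius, pow_pow_eq_self]
  simpa [hkn, IsPeriodicPt, IsFixedPt, frobenius_def] using hk.gcd hn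

lemma ncard_fixedPoints_iterateFrobenius_le {k : ℕ} (hkn : k.gcd n = 1) :
    (fixedPoints (iterateFrobenius (GaloisField 2 n) 2 k)).ncard ≤ 2 := by
  have hsub : fixedPoints (iterateFrobenius (GaloisField 2 n) 2 k) ⊆ {0, 1} := fun x hx => by
    have hx2 : x ^ 2 = x := pow_eq_self_of_pow_pow_eq_self hkn hx
    rcases IsIdempotentElem.iff_eq_zero_or_one.mp (by rwa [← pow_two] : x * x = x) with h | h <;>
      simp [h]
  exact (Set.ncard_le_ncard hsub).trans (Set.ncard_insert_le _ _) |>.trans (by simp)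

end GaloisField

lemma ipow_pow {n : ℕ} (j : ℕ) (x : GaloisField 2 n) : ipow j x ^ 2 ^ j = x :=
  rightInverse_invFun (Finite.injective_iff_surjective.mp
    (iterateFrobenius_inj (GaloisField 2 n) 2 j)) x

lemma equation_pow_eq_linearizedEval {n : ℕ} (k : ℕ) (b c u : GaloisField 2 n) :
    (b * u ^ 2 ^ k + ipow k b * ipow k u + c * u ^ 2 ^ (2 * k) +
        ipow (2 * k) c * ipow (2 * k) u) ^ 2 ^ (2 * k) =
      linearizedEval (iterateFrobenius _ 2 k)
        (fun i => [c, b ^ 2 ^ k, 0, b ^ 2 ^ (2 * k), c ^ 2 ^ (2 * k)].getD i 0) 4 u := by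
  have hk : ∀ x : GaloisField 2 n, ipow k x ^ 2 ^ (2 * k) = x ^ 2 ^ k := fun x => by
    rw [two_mul, pow_add, pow_mul, ipow_pow]
  simp only [linearizedEval, sum_range_succ, range_zero, sum_empty, ← iterateFrobenius_mul_apply,
    iterateFrobenius_def, add_pow_char_pow, mul_pow, hk, ipow_pow, List.getD_cons_succ,
    List.getD_cons_zero, zero_mul, zero_add, add_zero]
  ring_nf

theorem stmt_14_general (n k : ℕ) (hkn : Nat.gcd k n = 1)
    (b c : GaloisField 2 n) (hbc : ¬(b = 0 ∧ c = 0)) :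
    {u : GaloisField 2 n |
        b * u ^ 2 ^ k + ipow k b * ipow k u + c * u ^ 2 ^ (2 * k) +
          ipow (2 * k) c * ipow (2 * k) u = 0}.ncard ≤ 16 := by
  set a : ℕ → GaloisField 2 n :=
    fun i => [c, b ^ 2 ^ k, 0, b ^ 2 ^ (2 * k), c ^ 2 ^ (2 * k)].getD i 0
  have ha : ∃ i ≤ 4, a i ≠ 0 := by
    by_cases hb : b = 0
    · exact ⟨0, by norm_num, fun hc => hbc ⟨hb, hc⟩⟩
    · exact ⟨1, by norm_num, pow_ne_zero _ hb⟩
  have hsol : ∀ u : GaloisField 2 n,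
      b * u ^ 2 ^ k + ipow k b * ipow k u + c * u ^ 2 ^ (2 * k) +
          ipow (2 * k) c * ipow (2 * k) u = 0 ↔
        linearizedEval (iterateFrobenius _ 2 k) a 4 u = 0 := fun u => by
    rw [← equation_pow_eq_linearizedEval, pow_eq_zero_iff (by positivity)]
  simp only [hsol]
  exact ncard_setOf_linearizedEval_eq_zero_le _
    (GaloisField.ncard_fixedPoints_iterateFrobenius_le hkn) 4 a ha

/-- The equation `b u^{2^k} + b^{2^{-k}} u^{2^{-k}} + c u^{2^{2k}} + c^{2^{-2k}} u^{2^{-2k}} = 0`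
has at most 16 solutions. -/
theorem stmt_14 (n k : ℕ) (hn : Odd n) (hk : 0 < k) (hkn : Nat.gcd k n = 1)
    (b c : GaloisField 2 n) (hbc : ¬(b = 0 ∧ c = 0)) :
    {u : GaloisField 2 n |
        b * u ^ 2 ^ k + ipow k b * ipow k u + c * u ^ 2 ^ (2 * k) +
          ipow (2 * k) c * ipow (2 * k) u = 0}.ncard ≤ 16 :=
  stmt_14_general n k hkn b c hbc
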